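/- Let Ψ¹,…,Ψ^M be linearly independent vectors in a complex Hilbert space Z such that the matrix 𝓔 = (ε_{ij}) defined by ⟨Ψ^i,Ψ^j⟩ = δ_{ij} + ε_{ij} satisfies ‖𝓔‖₁ < 1. For 2 ≤ i ≤ M let A_{i−1} be the (i−1)×(i−1) Gram matrix with entries (A_{i−1})_{jk} = ⟨Ψ^j,Ψ^k⟩; then each A_{i−1} is invertible, and the M×M matrix B̃ = (b̃_{ij}) defined by b̃_{ij} := Σ_{k=1}^{i−1} (A_{i−1}^{-1})_{jk} ε_{ki} for 2 ≤ i ≤ M and 1 ≤ j ≤ i−1, and b̃_{ij} := 0 otherwise, satisfies ‖B̃‖_∞ ≤ ‖𝓔‖₁ (1 − ‖𝓔‖₁)^{-1}. -/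

import Mathlib

/-! The Gram matrix `A_{i-1}` is `1 + E` for the principal submatrix `E` of `𝓔` on the first
`i - 1` indices, whose column sums are at most `‖𝓔‖₁ < 1`. Applying the Neumann series to `Eᵀ`
in the row-sum operator norm shows that `A_{i-1}` is invertible with every column sum of
`A_{i-1}⁻¹` at most `(1 - ‖𝓔‖₁)⁻¹`. Row `i` of `B̃` is `A_{i-1}⁻¹` applied to the first `i - 1`
entries of column `i` of `𝓔`, a vector of `ℓ¹` norm at most `‖𝓔‖₁`, and the column-sum norm of a
matrix bounds its action on `ℓ¹`. -/

open scoped InnerProductSpace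

/-- Maximum absolute column sum norm of a matrix. -/
noncomputable def matNorm1 {M : ℕ} {𝕜 : Type*} [NormedField 𝕜]
    (A : Matrix (Fin M) (Fin M) 𝕜) : ℝ :=
  ⨆ j, ∑ i, ‖A i j‖

/-- Maximum absolute row sum norm of a matrix. -/
noncomputable def matNormInf {M : ℕ} {𝕜 : Type*} [NormedField 𝕜]
    (A : Matrix (Fin M) (Fin M) 𝕜) : ℝ :=
  ⨆ i, ∑ j, ‖A i j‖

/-- The Gram matrix of the first `i` vectors of `Ψ`. -/
noncomputable def gram {Z : Type*} [NormedAddCommGroup Z] [InnerProductSpace ℂ Z]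
    {M : ℕ} (Ψ : Fin M → Z) (i : Fin M) : Matrix (Fin i.val) (Fin i.val) ℂ :=
  fun j k => ⟪Ψ (Fin.castLE i.isLt.le j), Ψ (Fin.castLE i.isLt.le k)⟫_ℂ

open scoped NNReal Matrix

theorem Fintype.sum_comp_le_sum_of_injective {ι κ : Type*} [Fintype ι] [Fintype κ] {e : ι → κ}
    (he : e.Injective) {f : κ → ℝ} (hf : 0 ≤ f) : ∑ i, f (e i) ≤ ∑ j, f j := by
  simpa using Finset.sum_le_univ_sum_of_nonneg (s := Finset.univ.map ⟨e, he⟩) hf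

theorem Fin.sum_dite_val_lt {R : Type*} [AddCommMonoid R] {M n : ℕ} (hn : n ≤ M)
    (f : Fin n → R) : ∑ j : Fin M, (if h : (j : ℕ) < n then f ⟨j, h⟩ else 0) = ∑ j, f j := by
  refine (Fintype.sum_of_injective (Fin.castLE hn) (Fin.castLE_injective hn) f _
    (fun j hj => dif_neg fun h => hj ⟨⟨j, h⟩, rfl⟩) fun j => ?_).symm
  simp

namespace Matrix

theorem sum_norm_mulVec_le {m n R : Type*} [Fintype m] [Fintype n] [NormedRing R]
    (A : Matrix m n R) (v : n → R) {c : ℝ} (hA : ∀ k, ∑ j, ‖A j k‖ ≤ c) :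
    ∑ j, ‖(A *ᵥ v) j‖ ≤ c * ∑ k, ‖v k‖ :=
  calc ∑ j, ‖(A *ᵥ v) j‖ ≤ ∑ j, ∑ k, ‖A j k‖ * ‖v k‖ :=
        Finset.sum_le_sum fun j _ =>
          (norm_sum_le _ _).trans (Finset.sum_le_sum fun k _ => norm_mul_le _ _)
    _ = ∑ k, (∑ j, ‖A j k‖) * ‖v k‖ := by
        rw [Finset.sum_comm]
        simp_rw [Finset.sum_mul]
    _ ≤ ∑ k, c * ‖v k‖ :=
        Finset.sum_le_sum fun k _ => mul_le_mul_of_nonneg_right (hA k) (norm_nonneg _)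
    _ = c * ∑ k, ‖v k‖ := (Finset.mul_sum _ _ _).symm

attribute [local instance] Matrix.linftyOpNormedAddCommGroup Matrix.linftyOpNormedRing

section LinftyOpNorm

variable {m n R : Type*} [Fintype m] [Fintype n] [NormedRing R]

theorem sum_norm_le_linfty_opNorm (A : Matrix m n R) (i : m) : ∑ j, ‖A i j‖ ≤ ‖A‖ := by
  rw [linfty_opNorm_def]
  simpa [NNReal.coe_sum] using
    NNReal.coe_le_coe.mpr (Finset.le_sup (f := fun i => ∑ j, ‖A i j‖₊) (Finset.mem_univ i))

theorem linfty_opNorm_le_of_sum_norm_le (A : Matrix m n R) {q : ℝ} (hq : 0 ≤ q)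
    (h : ∀ i, ∑ j, ‖A i j‖ ≤ q) : ‖A‖ ≤ q := by
  lift q to ℝ≥0 using hq
  rw [linfty_opNorm_def, NNReal.coe_le_coe]
  exact Finset.sup_le fun i _ => by simpa [← NNReal.coe_le_coe, NNReal.coe_sum] using h i

theorem linfty_opNorm_one_le [DecidableEq n] [NormOneClass R] : ‖(1 : Matrix n n R)‖ ≤ 1 := by
  rw [← diagonal_one, linfty_opNorm_diagonal]
  exact pi_norm_le_iff_of_nonneg zero_le_one |>.mpr fun _ => norm_one.le

end LinftyOpNorm

variable {n 𝕜 : Type*} [Fintype n] [DecidableEq n] [NormedField 𝕜] [CompleteSpace 𝕜]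

-- The uniformity of the linfty norm agrees with the product one of `Matrix` only up to
-- unfolding, so instance search does not see completeness and it is transported by hand.
local instance : HasSummableGeomSeries (Matrix n n 𝕜) :=
  @instHasSummableGeomSeriesOfCompleteSpace _ _ (inferInstanceAs (CompleteSpace (n → n → 𝕜)))

theorem isUnit_one_add_of_linfty_opNorm_lt_one {E : Matrix n n 𝕜} (hE : ‖E‖ < 1) :
    IsUnit (1 + E) := by
  simpa using isUnit_one_sub_of_norm_lt_one (x := -E) (by rwa [norm_neg])

theorem linfty_opNorm_inv_one_add_le {E : Matrix n n 𝕜} (hE : ‖E‖ < 1) :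
    ‖(1 + E)⁻¹‖ ≤ (1 - ‖E‖)⁻¹ := by
  have hE' : ‖-E‖ < 1 := by rwa [norm_neg]
  rw [nonsing_inv_eq_ringInverse, ← sub_neg_eq_add, NormedRing.inverse_one_sub _ hE']
  refine (tsum_geometric_le_of_norm_lt_one _ hE').trans ?_
  rw [norm_neg]
  linarith [linfty_opNorm_one_le (n := n) (R := 𝕜)]

theorem isUnit_one_add_and_sum_norm_inv_le {E : Matrix n n 𝕜} {q : ℝ} (hq0 : 0 ≤ q) (hq : q < 1)
    (hE : ∀ k, ∑ j, ‖E j k‖ ≤ q) :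
    IsUnit (1 + E) ∧ ∀ k, ∑ j, ‖(1 + E)⁻¹ j k‖ ≤ (1 - q)⁻¹ := by
  have hEt : ‖Eᵀ‖ ≤ q := linfty_opNorm_le_of_sum_norm_le _ hq0 hE
  have hEt1 : ‖Eᵀ‖ < 1 := hEt.trans_lt hq
  have htr : (1 + E)ᵀ = 1 + Eᵀ := by rw [transpose_add, transpose_one]
  refine ⟨?_, fun k => ?_⟩
  · rw [← isUnit_transpose, htr]
    exact isUnit_one_add_of_linfty_opNorm_lt_one hEt1
  calc ∑ j, ‖(1 + E)⁻¹ j k‖ = ∑ j, ‖(1 + Eᵀ)⁻¹ k j‖ := by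
        rw [← htr, ← transpose_nonsing_inv]; rfl
    _ ≤ ‖(1 + Eᵀ)⁻¹‖ := sum_norm_le_linfty_opNorm _ k
    _ ≤ (1 - ‖Eᵀ‖)⁻¹ := linfty_opNorm_inv_one_add_le hEt1
    _ ≤ (1 - q)⁻¹ := by gcongr

end Matrix

section MatNorm

variable {M : ℕ} {𝕜 : Type*} [NormedField 𝕜]

theorem matNorm1_nonneg (A : Matrix (Fin M) (Fin M) 𝕜) : 0 ≤ matNorm1 A :=
  Real.iSup_nonneg fun _ => Finset.sum_nonneg fun _ _ => norm_nonneg _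

theorem sum_norm_le_matNorm1 (A : Matrix (Fin M) (Fin M) 𝕜) (j : Fin M) :
    ∑ i, ‖A i j‖ ≤ matNorm1 A :=
  le_ciSup (f := fun j => ∑ i, ‖A i j‖) (Set.finite_range _).bddAbove j

theorem matNormInf_le (A : Matrix (Fin M) (Fin M) 𝕜) {c : ℝ} (hc : 0 ≤ c)
    (h : ∀ i, ∑ j, ‖A i j‖ ≤ c) : matNormInf A ≤ c :=
  Real.iSup_le h hc

end MatNorm

section Gram

variable {Z : Type*} [NormedAddCommGroup Z] [InnerProductSpace ℂ Z] {M : ℕ}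

theorem gram_eq_one_add_submatrix {Ψ : Fin M → Z} {ε : Matrix (Fin M) (Fin M) ℂ}
    (hε : ∀ i j, ⟪Ψ i, Ψ j⟫_ℂ = (if i = j then 1 else 0) + ε i j) (i : Fin M) :
    gram Ψ i = 1 + ε.submatrix (Fin.castLE i.isLt.le) (Fin.castLE i.isLt.le) := by
  ext j k
  simp [gram, hε, Matrix.one_apply, Fin.castLE_inj]

theorem isUnit_gram_and_sum_norm_inv_le {Ψ : Fin M → Z} {ε : Matrix (Fin M) (Fin M) ℂ}
    (hε : ∀ i j, ⟪Ψ i, Ψ j⟫_ℂ = (if i = j then 1 else 0) + ε i j) (hsmall : matNorm1 ε < 1)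
    (i : Fin M) :
    IsUnit (gram Ψ i) ∧ ∀ k, ∑ j, ‖(gram Ψ i)⁻¹ j k‖ ≤ (1 - matNorm1 ε)⁻¹ := by
  rw [gram_eq_one_add_submatrix hε]
  refine Matrix.isUnit_one_add_and_sum_norm_inv_le (matNorm1_nonneg ε) hsmall fun k => ?_
  exact (Fintype.sum_comp_le_sum_of_injective (Fin.castLE_injective _)
    (fun _ => norm_nonneg _)).trans (sum_norm_le_matNorm1 ε _)

end Gram

theorem stmt4_general {Z : Type*} [NormedAddCommGroup Z] [InnerProductSpace ℂ Z]
    {M : ℕ} (Ψ : Fin M → Z)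
    (ε : Matrix (Fin M) (Fin M) ℂ)
    (hε : ∀ i j, (⟪Ψ i, Ψ j⟫_ℂ) = (if i = j then 1 else 0) + ε i j)
    (hsmall : matNorm1 ε < 1)
    (B : Matrix (Fin M) (Fin M) ℂ)
    (hB : ∀ i j : Fin M, B i j =
      if h : (j : ℕ) < (i : ℕ) then
        ∑ k : Fin i.val, (gram Ψ i)⁻¹ ⟨(j : ℕ), h⟩ k * ε (Fin.castLE i.isLt.le k) i
      else 0) :
    (∀ i : Fin M, IsUnit (gram Ψ i)) ∧
    matNormInf B ≤ matNorm1 ε * (1 - matNorm1 ε)⁻¹ := by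
  set q := matNorm1 ε
  have hgram := isUnit_gram_and_sum_norm_inv_le hε hsmall
  have hbound : 0 ≤ q * (1 - q)⁻¹ := mul_nonneg (matNorm1_nonneg ε) (inv_nonneg.mpr (by linarith))
  refine ⟨fun i => (hgram i).1, matNormInf_le B hbound fun i => ?_⟩
  set e : Fin i → ℂ := fun k => ε (Fin.castLE i.isLt.le k) i
  have he : ∑ k, ‖e k‖ ≤ q :=
    (Fintype.sum_comp_le_sum_of_injective (f := fun j => ‖ε j i‖)
      (Fin.castLE_injective i.isLt.le) fun _ => norm_nonneg _).trans (sum_norm_le_matNorm1 ε i)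
  calc ∑ j, ‖B i j‖ = ∑ j, ‖((gram Ψ i)⁻¹ *ᵥ e) j‖ := by
        simp_rw [hB, apply_dite (fun z : ℂ => ‖z‖), norm_zero]
        exact Fin.sum_dite_val_lt i.isLt.le fun j => ‖((gram Ψ i)⁻¹ *ᵥ e) j‖
    _ ≤ (1 - q)⁻¹ * ∑ k, ‖e k‖ := Matrix.sum_norm_mulVec_le _ _ (hgram i).2
    _ ≤ (1 - q)⁻¹ * q := by gcongr
    _ = q * (1 - q)⁻¹ := mul_comm _ _

theorem stmt4 {Z : Type*} [NormedAddCommGroup Z] [InnerProductSpace ℂ Z] [CompleteSpace Z]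
    {M : ℕ} (Ψ : Fin M → Z) (hΨ : LinearIndependent ℂ Ψ)
    (ε : Matrix (Fin M) (Fin M) ℂ)
    (hε : ∀ i j, (⟪Ψ i, Ψ j⟫_ℂ) = (if i = j then 1 else 0) + ε i j)
    (hsmall : matNorm1 ε < 1)
    (B : Matrix (Fin M) (Fin M) ℂ)
    (hB : ∀ i j : Fin M, B i j =
      if h : (j : ℕ) < (i : ℕ) then
        ∑ k : Fin i.val, (gram Ψ i)⁻¹ ⟨(j : ℕ), h⟩ k * ε (Fin.castLE i.isLt.le k) i
      else 0) :
    (∀ i : Fin M, IsUnit (gram Ψ i)) ∧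
    matNormInf B ≤ matNorm1 ε * (1 - matNorm1 ε)⁻¹ :=
  stmt4_general Ψ ε hε hsmall B hB
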